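/- arXiv:2205.05966 — 5 statements merged into one kernel-verified Lean document; each statement's English description precedes it below -/
import Mathlib

section
/- Let M ≥ 4 be an even integer, T > 0, and set Δt := T/M. For each k ∈ {1,…,M/2−1} let s̃_k ∈ ℂ, S_k > 0 and Q_k ∈ ℂ, and let γ > 0 satisfy |Q_k|/√(S_k·Δt) ≤ γ for every such k. Fix j ∈ {0,1,…,M−1} and define ρ̃_0 := 0 and, for k ∈ {1,…,M/2−1}, ρ̃_k := Re(2·conj(Q_k)·s̃_k/(S_k·Δt))·cos(2πjk/M) − Im(2·conj(Q_k)·s̃_k/(S_k·Δt))·sin(2πjk/M). Assume that (Mean({2·Re(s̃_k)/√(S_k·T)}_{k=1,…,M/2−1}))² ≤ 1, (Mean({2·Im(s̃_k)/√(S_k·T)}_{k=1,…,M/2−1}))² ≤ 1, Var({2·Re(s̃_k)/√(S_k·T)}_{k=1,…,M/2−1}) ≤ 4, and Var({2·Im(s̃_k)/√(S_k·T)}_{k=1,…,M/2−1}) ≤ 4. Then Var({ρ̃_k}_{k=0,…,M/2−1}) ≤ 80·M·γ². -/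
/-! The variance is at most the second moment. Writing `a_k`, `b_k` for the normalised real and
imaginary parts `2 Re s̃_k / √(S_k T)`, `2 Im s̃_k / √(S_k T)`, each summand is bounded by a
rotation argument and `Δt = T / M`:
`ρ̃_k² ≤ |2 conj(Q_k) s̃_k / (S_k Δt)|² ≤ 4 γ² |s̃_k|² / (S_k Δt) = M γ² (a_k² + b_k²)`,
and the second moment of `a` (or `b`) is its variance plus its squared mean, at most `5`.
This gives `10 M γ²`. -/

open Real

/-- Sample mean of the family `{f k}_{k ∈ s}`. -/
noncomputable def fMean (s : Finset ℕ) (f : ℕ → ℝ) : ℝ := (∑ k ∈ s, f k) / s.card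

/-- Sample variance of the family `{f k}_{k ∈ s}`. -/
noncomputable def fVar (s : Finset ℕ) (f : ℕ → ℝ) : ℝ :=
  (∑ k ∈ s, (f k - fMean s f) ^ 2) / s.card

section SampleMoments

variable (s : Finset ℕ) (f : ℕ → ℝ)

theorem sum_sq_eq_card_mul_fVar_add_fMean_sq :
    ∑ k ∈ s, f k ^ 2 = s.card * (fVar s f + fMean s f ^ 2) := by
  rcases s.eq_empty_or_nonempty with rfl | hs
  · simp
  have hcard : (s.card : ℝ) ≠ 0 := by exact_mod_cast hs.card_pos.ne'
  have hsum : ∑ k ∈ s, f k = s.card * fMean s f := by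
    rw [fMean, mul_div_cancel₀ _ hcard]
  have hdev : ∑ k ∈ s, (f k - fMean s f) ^ 2
      = ∑ k ∈ s, f k ^ 2 - 2 * fMean s f * ∑ k ∈ s, f k + s.card * fMean s f ^ 2 :=
    calc ∑ k ∈ s, (f k - fMean s f) ^ 2
        = ∑ k ∈ s, (f k ^ 2 - 2 * fMean s f * f k + fMean s f ^ 2) :=
          Finset.sum_congr rfl fun _ _ => by ring
      _ = _ := by
          rw [Finset.sum_add_distrib, Finset.sum_sub_distrib, ← Finset.mul_sum,
            Finset.sum_const, nsmul_eq_mul]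
  rw [mul_add, fVar, mul_div_cancel₀ _ hcard, hdev, hsum]
  ring

theorem fVar_le_sum_sq_div_card : fVar s f ≤ (∑ k ∈ s, f k ^ 2) / s.card := by
  rw [sum_sq_eq_card_mul_fVar_add_fMean_sq]
  rcases s.eq_empty_or_nonempty with rfl | hs
  · simp [fVar]
  rw [mul_div_cancel_left₀ _ (by exact_mod_cast hs.card_pos.ne')]
  nlinarith [sq_nonneg (fMean s f)]

variable {s f}

theorem fVar_le_of_sum_sq_le {C : ℝ} (hC : 0 ≤ C) (h : ∑ k ∈ s, f k ^ 2 ≤ C * s.card) :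
    fVar s f ≤ C := by
  refine (fVar_le_sum_sq_div_card s f).trans ?_
  rcases s.eq_empty_or_nonempty with rfl | hs
  · simpa using hC
  exact (div_le_iff₀ (by exact_mod_cast hs.card_pos)).mpr h

theorem sum_sq_le_of_fMean_sq_le_of_fVar_le {μ v : ℝ} (hμ : fMean s f ^ 2 ≤ μ)
    (hv : fVar s f ≤ v) : ∑ k ∈ s, f k ^ 2 ≤ s.card * (v + μ) := by
  rw [sum_sq_eq_card_mul_fVar_add_fMean_sq]
  gcongr

end SampleMoments

theorem Finset.sum_range_eq_sum_Icc_of_apply_zero {β : Type*} [AddCommMonoid β] {f : ℕ → β}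
    (hf : f 0 = 0) (m : ℕ) : ∑ k ∈ Finset.range m, f k = ∑ k ∈ Finset.Icc 1 (m - 1), f k := by
  refine (Finset.sum_subset (fun k hk => ?_) fun k hk hk' => ?_).symm
  · simp only [Finset.mem_Icc, Finset.mem_range] at hk ⊢
    omega
  · simp only [Finset.mem_Icc, Finset.mem_range] at hk hk'
    obtain rfl : k = 0 := by omega
    exact hf

theorem sq_re_mul_cos_sub_im_mul_sin_le_norm_sq (w : ℂ) (θ : ℝ) :
    (w.re * cos θ - w.im * sin θ) ^ 2 ≤ ‖w‖ ^ 2 := by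
  rw [Complex.sq_norm, Complex.normSq_apply]
  nlinarith [sin_sq_add_cos_sq θ, sq_nonneg (w.re * sin θ + w.im * cos θ)]

theorem norm_sq_two_mul_conj_mul_div_le {q z : ℂ} {r γ : ℝ} (hr : 0 < r) (hq : ‖q‖ / √r ≤ γ) :
    ‖2 * starRingEnd ℂ q * z / (r : ℂ)‖ ^ 2 ≤ 4 * γ ^ 2 * ‖z‖ ^ 2 / r := by
  have hq' : ‖q‖ ^ 2 ≤ γ ^ 2 * r := by
    have h := (div_le_iff₀ (sqrt_pos.mpr hr)).mp hq
    calc ‖q‖ ^ 2 ≤ (γ * √r) ^ 2 := pow_le_pow_left₀ (norm_nonneg q) h 2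
      _ = γ ^ 2 * r := by rw [mul_pow, sq_sqrt hr.le]
  rw [norm_div, norm_mul, norm_mul, Complex.norm_two, Complex.norm_conj, Complex.norm_real,
    norm_of_nonneg hr.le, le_div_iff₀ hr]
  calc (2 * ‖q‖ * ‖z‖ / r) ^ 2 * r = 4 * ‖z‖ ^ 2 * ‖q‖ ^ 2 / r := by field_simp; ring
    _ ≤ 4 * ‖z‖ ^ 2 * (γ ^ 2 * r) / r := by gcongr
    _ = 4 * γ ^ 2 * ‖z‖ ^ 2 := by field_simp

theorem sq_two_mul_re_div_sqrt_add_sq_two_mul_im_div_sqrt (z : ℂ) {u : ℝ} (hu : 0 ≤ u) :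
    (2 * z.re / √u) ^ 2 + (2 * z.im / √u) ^ 2 = 4 * ‖z‖ ^ 2 / u := by
  rw [div_pow, div_pow, sq_sqrt hu, Complex.sq_norm, Complex.normSq_apply]
  ring

theorem var_snr_summand_le_general (M : ℕ) (hM4 : 4 ≤ M)
    (T : ℝ) (hT : 0 < T) (Δt : ℝ) (hΔt : Δt = T / M)
    (sf Q : ℕ → ℂ) (S : ℕ → ℝ)
    (hS : ∀ k ∈ Finset.Icc 1 (M / 2 - 1), 0 < S k)
    (γ : ℝ)
    (hQ : ∀ k ∈ Finset.Icc 1 (M / 2 - 1),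
      ‖Q k‖ / Real.sqrt (S k * Δt) ≤ γ)
    (j : ℕ)
    (ρ : ℕ → ℝ) (hρ0 : ρ 0 = 0)
    (hρ : ∀ k ∈ Finset.Icc 1 (M / 2 - 1),
      ρ k = (2 * (starRingEnd ℂ) (Q k) * sf k / ((S k * Δt : ℝ) : ℂ)).re *
              Real.cos (2 * π * (j : ℝ) * (k : ℝ) / (M : ℝ))
          - (2 * (starRingEnd ℂ) (Q k) * sf k / ((S k * Δt : ℝ) : ℂ)).im *
              Real.sin (2 * π * (j : ℝ) * (k : ℝ) / (M : ℝ)))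
    (hmRe : (fMean (Finset.Icc 1 (M / 2 - 1))
        (fun k => 2 * (sf k).re / Real.sqrt (S k * T))) ^ 2 ≤ 1)
    (hmIm : (fMean (Finset.Icc 1 (M / 2 - 1))
        (fun k => 2 * (sf k).im / Real.sqrt (S k * T))) ^ 2 ≤ 1)
    (hvRe : fVar (Finset.Icc 1 (M / 2 - 1))
        (fun k => 2 * (sf k).re / Real.sqrt (S k * T)) ≤ 4)
    (hvIm : fVar (Finset.Icc 1 (M / 2 - 1))
        (fun k => 2 * (sf k).im / Real.sqrt (S k * T)) ≤ 4) :
    fVar (Finset.range (M / 2)) ρ ≤ 80 * M * γ ^ 2 := by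
  set s := Finset.Icc 1 (M / 2 - 1)
  set a := fun k => 2 * (sf k).re / √(S k * T)
  set b := fun k => 2 * (sf k).im / √(S k * T)
  have hM : (0 : ℝ) < M := Nat.cast_pos.mpr (by omega)
  have hsummand : ∀ k ∈ s, ρ k ^ 2 ≤ M * γ ^ 2 * (a k ^ 2 + b k ^ 2) := fun k hk => by
    have hr : 0 < S k * Δt := mul_pos (hS k hk) (hΔt ▸ div_pos hT hM)
    have hST : S k * T = M * (S k * Δt) := by rw [hΔt]; field_simp
    calc ρ k ^ 2 ≤ 4 * γ ^ 2 * ‖sf k‖ ^ 2 / (S k * Δt) := hρ k hk ▸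
          (sq_re_mul_cos_sub_im_mul_sin_le_norm_sq _ _).trans
            (norm_sq_two_mul_conj_mul_div_le hr (hQ k hk))
      _ = M * γ ^ 2 * (a k ^ 2 + b k ^ 2) := by
          rw [sq_two_mul_re_div_sqrt_add_sq_two_mul_im_div_sqrt _ (mul_pos (hS k hk) hT).le, hST]
          field_simp
  have hsum : ∑ k ∈ Finset.range (M / 2), ρ k ^ 2
      ≤ 10 * M * γ ^ 2 * (Finset.range (M / 2)).card := by
    rw [Finset.sum_range_eq_sum_Icc_of_apply_zero (f := fun k => ρ k ^ 2) (by simp [hρ0])]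
    have hs : (s.card : ℝ) ≤ (Finset.range (M / 2)).card := by
      exact_mod_cast Finset.card_le_card fun k hk => by
        simp only [s, Finset.mem_Icc, Finset.mem_range] at hk ⊢; omega
    calc ∑ k ∈ s, ρ k ^ 2 ≤ M * γ ^ 2 * (∑ k ∈ s, a k ^ 2 + ∑ k ∈ s, b k ^ 2) := by
          rw [← Finset.sum_add_distrib, Finset.mul_sum]; exact Finset.sum_le_sum hsummand
      _ ≤ M * γ ^ 2 * (s.card * (4 + 1) + s.card * (4 + 1)) := by
          gcongr
          exacts [sum_sq_le_of_fMean_sq_le_of_fVar_le hmRe hvRe,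
            sum_sq_le_of_fMean_sq_le_of_fVar_le hmIm hvIm]
      _ ≤ _ := by nlinarith [mul_nonneg hM.le (sq_nonneg γ)]
  calc fVar (Finset.range (M / 2)) ρ ≤ 10 * M * γ ^ 2 :=
        fVar_le_of_sum_sq_le (by positivity) hsum
    _ ≤ 80 * M * γ ^ 2 := by nlinarith [mul_nonneg hM.le (sq_nonneg γ)]

/-- Variance bound for the summands of the SNR computation: under the
normalization bounds on the whitened data, the family
`ρ̃ 0 = 0`, `ρ̃ k = Re(2·conj(Q k)·sf k/(S k·Δt))·cos(2πjk/M)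
             − Im(2·conj(Q k)·sf k/(S k·Δt))·sin(2πjk/M)`
has sample variance at most `80·M·γ²` over `{0,…,M/2−1}`. -/
theorem var_snr_summand_le (M : ℕ) (hM4 : 4 ≤ M) (hMe : Even M)
    (T : ℝ) (hT : 0 < T) (Δt : ℝ) (hΔt : Δt = T / M)
    (sf Q : ℕ → ℂ) (S : ℕ → ℝ)
    (hS : ∀ k ∈ Finset.Icc 1 (M / 2 - 1), 0 < S k)
    (γ : ℝ) (hγ : 0 < γ)
    (hQ : ∀ k ∈ Finset.Icc 1 (M / 2 - 1),
      ‖Q k‖ / Real.sqrt (S k * Δt) ≤ γ)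
    (j : ℕ) (hj : j < M)
    (ρ : ℕ → ℝ) (hρ0 : ρ 0 = 0)
    (hρ : ∀ k ∈ Finset.Icc 1 (M / 2 - 1),
      ρ k = (2 * (starRingEnd ℂ) (Q k) * sf k / ((S k * Δt : ℝ) : ℂ)).re *
              Real.cos (2 * π * (j : ℝ) * (k : ℝ) / (M : ℝ))
          - (2 * (starRingEnd ℂ) (Q k) * sf k / ((S k * Δt : ℝ) : ℂ)).im *
              Real.sin (2 * π * (j : ℝ) * (k : ℝ) / (M : ℝ)))
    (hmRe : (fMean (Finset.Icc 1 (M / 2 - 1))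
        (fun k => 2 * (sf k).re / Real.sqrt (S k * T))) ^ 2 ≤ 1)
    (hmIm : (fMean (Finset.Icc 1 (M / 2 - 1))
        (fun k => 2 * (sf k).im / Real.sqrt (S k * T))) ^ 2 ≤ 1)
    (hvRe : fVar (Finset.Icc 1 (M / 2 - 1))
        (fun k => 2 * (sf k).re / Real.sqrt (S k * T)) ≤ 4)
    (hvIm : fVar (Finset.Icc 1 (M / 2 - 1))
        (fun k => 2 * (sf k).im / Real.sqrt (S k * T)) ≤ 4) :
    fVar (Finset.range (M / 2)) ρ ≤ 80 * M * γ ^ 2 :=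
  var_snr_summand_le_general M hM4 T hT Δt hΔt sf Q S hS γ hQ j ρ hρ0 hρ hmRe hmIm hvRe hvIm
end

section
/- Let μ ∈ ℝ, ε > 0 and δ ∈ (0,1), and set N := 12·⌈log(1/δ)⌉ + 1 (natural logarithm). Let Y_1,…,Y_N be independent, identically distributed real-valued random variables such that P(|Y_i − μ| ≤ ε) ≥ 3/4 for each i. Then the probability that the median of Y_1,…,Y_N is within ε of μ is at least 1 − δ, i.e. P(|med(Y_1,…,Y_N) − μ| ≤ ε) ≥ 1 − δ. -/
/- Call the index i bad when |Y i - μ| > ε. If at most N / 2 indices are bad, more than half of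
the Y i lie in [μ - ε, μ + ε], and then so does the median. The indicators of the bad events are
independent with mean at most 1/4, so at t = log 3 each has moment generating function at most
1 + 2 / 4 = 3/2. With k = ⌈log δ⁻¹⌉ and N = 12k + 1, the Chernoff bound gives
P(at least 6k + 1 bad) ≤ 3^-(6k+1) (3/2)^(12k+1) ≤ (3⁶/2¹²)^k ≤ e^-k ≤ δ. -/

open scoped Classical
open MeasureTheory ProbabilityTheory

/-- The median of an odd-length family of reals: the middle entry of the list
sorted in nondecreasing order (the `(N+1)/2`-th smallest value). -/
noncomputable def med {N : ℕ} (x : Fin N → ℝ) : ℝ :=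
  ((List.ofFn x).insertionSort (· ≤ ·)).getD (N / 2) 0

open Finset Real

namespace List

variable {α : Type*} [LinearOrder α] {l : List α} {k : ℕ}

lemma Pairwise.getElem_le_of_mem_drop (hl : l.Pairwise (· ≤ ·)) (hk : k < l.length) {y : α}
    (hy : y ∈ l.drop k) : l[k] ≤ y := by
  have hdrop := hl.drop (i := k)
  rw [drop_eq_getElem_cons hk, pairwise_cons] at hdrop
  rw [drop_eq_getElem_cons hk, mem_cons] at hy
  rcases hy with rfl | hy
  exacts [le_rfl, hdrop.1 y hy]

lemma Pairwise.le_getElem_of_mem_take (hl : l.Pairwise (· ≤ ·)) (hk : k < l.length) {y : α}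
    (hy : y ∈ l.take (k + 1)) : y ≤ l[k] := by
  have htake := hl.take (i := k + 1)
  rw [← take_concat_get' l k hk, pairwise_append] at htake
  rw [← take_concat_get' l k hk, mem_append, mem_singleton] at hy
  rcases hy with hy | rfl
  exacts [htake.2.2 y hy _ (mem_singleton_self _), le_rfl]

lemma Pairwise.countP_le_le_of_lt_getElem (hl : l.Pairwise (· ≤ ·)) (hk : k < l.length) {b : α}
    (hb : b < l[k]) : l.countP (· ≤ b) ≤ k := by
  have hdrop : (l.drop k).countP (· ≤ b) = 0 :=
    countP_eq_zero.2 fun y hy => by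
      simpa using hb.trans_le (hl.getElem_le_of_mem_drop hk hy)
  calc l.countP (· ≤ b) = (l.take k).countP (· ≤ b) + (l.drop k).countP (· ≤ b) := by
        rw [← countP_append, take_append_drop]
    _ ≤ k := by
        rw [hdrop, add_zero]
        exact countP_le_length.trans (length_take_le _ _)

lemma Pairwise.countP_ge_le_of_getElem_lt (hl : l.Pairwise (· ≤ ·)) (hk : k < l.length) {a : α}
    (ha : l[k] < a) : l.countP (a ≤ ·) ≤ l.length - (k + 1) := by
  have htake : (l.take (k + 1)).countP (a ≤ ·) = 0 :=
    countP_eq_zero.2 fun y hy => by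
      simpa using (hl.le_getElem_of_mem_take hk hy).trans_lt ha
  calc l.countP (a ≤ ·)
        = (l.take (k + 1)).countP (a ≤ ·) + (l.drop (k + 1)).countP (a ≤ ·) := by
        rw [← countP_append, take_append_drop]
    _ ≤ l.length - (k + 1) := by
        rw [htake, zero_add, ← length_drop]
        exact countP_le_length

end List

lemma card_filter_univ_eq_countP_ofFn {α : Type*} {N : ℕ} (x : Fin N → α) (p : α → Prop)
    [DecidablePred p] : #{i | p (x i)} = (List.ofFn x).countP (fun y => decide (p y)) := by
  rw [← Multiset.coe_countP, ← Fin.univ_val_map, Multiset.countP_map]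
  rfl

lemma med_mem_Icc {N : ℕ} (x : Fin N → ℝ) {a b : ℝ}
    (h : N / 2 < #{i | x i ∈ Set.Icc a b}) :
    med x ∈ Set.Icc a b := by
  set l := (List.ofFn x).insertionSort (· ≤ ·)
  have hsorted : l.Pairwise (· ≤ ·) := List.pairwise_insertionSort _ _
  have hlen : l.length = N := by simp [l]
  have hcount : #{i | x i ∈ Set.Icc a b} = l.countP (fun y => decide (y ∈ Set.Icc a b)) := by
    rw [card_filter_univ_eq_countP_ofFn x (· ∈ Set.Icc a b),
      (List.perm_insertionSort _ _).countP_eq]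
  have hk : N / 2 < l.length := h.trans_le (hcount ▸ List.countP_le_length)
  have hmed : med x = l[N / 2] := List.getD_eq_getElem l 0 hk
  rw [hmed]
  constructor
  · by_contra! ha
    have := hsorted.countP_ge_le_of_getElem_lt hk ha
    have := List.countP_mono_left (l := l) (p := fun y => decide (y ∈ Set.Icc a b))
      (q := (a ≤ ·)) (by simp +contextual)
    omega
  · by_contra! hb
    have := hsorted.countP_le_le_of_lt_getElem hk hb
    have := List.countP_mono_left (l := l) (p := fun y => decide (y ∈ Set.Icc a b))
      (q := (· ≤ b)) (by simp +contextual)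
    omega

lemma inv_three_pow_mul_three_halves_pow_le (k : ℕ) :
    (3 : ℝ)⁻¹ ^ (6 * k + 1) * (3 / 2) ^ (12 * k + 1) ≤ exp (-k) := by
  have hbase : (3 : ℝ)⁻¹ ^ 6 * (3 / 2) ^ 12 ≤ exp (-1) := by
    calc (3 : ℝ)⁻¹ ^ 6 * (3 / 2) ^ 12 ≤ 3⁻¹ := by norm_num
      _ ≤ exp (-1) := by
        rw [exp_neg]
        exact inv_anti₀ (exp_pos 1) exp_one_lt_three.le
  calc (3 : ℝ)⁻¹ ^ (6 * k + 1) * (3 / 2) ^ (12 * k + 1)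
        = ((3 : ℝ)⁻¹ ^ 6 * (3 / 2) ^ 12) ^ k * (1 / 2) := by
          rw [pow_succ, pow_succ, pow_mul, pow_mul, mul_pow]
          ring
    _ ≤ exp (-1) ^ k * 1 := by gcongr; norm_num
    _ = exp (-k) := by rw [mul_one, ← exp_nat_mul]; ring_nf

lemma measurable_card_filter_mem {Ω ι : Type*} [Fintype ι] [MeasurableSpace Ω]
    {s : ι → Set Ω} (hs : ∀ i, MeasurableSet (s i)) : Measurable fun ω => #{i | ω ∈ s i} := by
  simp_rw [Finset.card_filter]
  exact measurable_sum _ fun i _ =>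
    Measurable.ite (hs i) measurable_const measurable_const

section
variable {Ω : Type*} [MeasurableSpace Ω] {P : Measure Ω}

lemma ProbabilityTheory.iIndepFun.iIndepSet_preimage {ι β : Type*} [MeasurableSpace β]
    {f : ι → Ω → β} (hf : iIndepFun f P) (hmeas : ∀ i, Measurable (f i)) {B : Set β}
    (hB : MeasurableSet B) :
    iIndepSet (fun i => f i ⁻¹' B) P :=
  (iIndepSet_iff_meas_biInter fun i => hmeas i hB).2 fun _ =>
    hf.meas_biInter fun _ _ => ⟨B, hB, rfl⟩

variable [IsProbabilityMeasure P]

lemma mgf_indicator_one {s : Set Ω} (hs : MeasurableSet s) (t : ℝ) :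
    mgf (s.indicator fun _ => 1) P t = 1 + (exp t - 1) * P.real s := by
  have hexp : (fun ω => exp (t * s.indicator (fun _ => 1) ω))
      = fun ω => 1 + s.indicator (fun _ => exp t - 1) ω := by
    funext ω
    by_cases hω : ω ∈ s <;> simp [hω]
  rw [mgf, hexp, integral_add (integrable_const _) ((integrable_const _).indicator hs),
    integral_const, integral_indicator_const _ hs]
  simp [mul_comm]

lemma measureReal_le_card_le {ι : Type*} [Fintype ι] {s : ι → Set Ω}
    (hs : ∀ i, MeasurableSet (s i)) (hindep : iIndepSet s P) {p t : ℝ}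
    (hp : ∀ i, P.real (s i) ≤ p) (ht : 0 ≤ t) (m : ℕ) :
    P.real {ω | m ≤ #{i | ω ∈ s i}} ≤
      exp (-t * m) * (1 + (exp t - 1) * p) ^ Fintype.card ι := by
  set X : ι → Ω → ℝ := fun i => (s i).indicator fun _ => 1
  have hXmeas : ∀ i, Measurable (X i) := fun i => measurable_const.indicator (hs i)
  have hsum : ∀ ω, (∑ i, X i) ω = #{i | ω ∈ s i} := by
    intro ω
    simp [X, Finset.sum_apply, Set.indicator_apply, Finset.sum_boole]
  have hint : Integrable (fun ω => exp (t * (∑ i, X i) ω)) P := by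
    refine Integrable.of_bound (by fun_prop) (exp (t * Fintype.card ι)) (ae_of_all _ fun ω => ?_)
    rw [hsum, Real.norm_eq_abs, abs_exp]
    gcongr
    exact_mod_cast card_le_univ _
  have hmgf : mgf (∑ i, X i) P t ≤ (1 + (exp t - 1) * p) ^ Fintype.card ι := by
    rw [hindep.iIndepFun_indicator.mgf_sum hXmeas, ← Finset.card_univ, ← Finset.prod_const]
    gcongr with i
    · exact fun _ _ => mgf_nonneg
    · rw [mgf_indicator_one (hs i)]
      gcongr
      · linarith [one_le_exp ht]
      · exact hp i
  calc P.real {ω | m ≤ #{i | ω ∈ s i}} = P.real {ω | (m : ℝ) ≤ (∑ i, X i) ω} := by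
        simp_rw [hsum, Nat.cast_le]
    _ ≤ exp (-t * m) * mgf (∑ i, X i) P t := measure_ge_le_exp_mul_mgf _ ht hint
    _ ≤ exp (-t * m) * (1 + (exp t - 1) * p) ^ Fintype.card ι := by gcongr

lemma measureReal_majority_le_exp_neg {ι : Type*} [Fintype ι] {k : ℕ}
    (hι : Fintype.card ι = 12 * k + 1) {s : ι → Set Ω} (hs : ∀ i, MeasurableSet (s i))
    (hindep : iIndepSet s P) (hp : ∀ i, P.real (s i) ≤ 1 / 4) :
    P.real {ω | 6 * k + 1 ≤ #{i | ω ∈ s i}} ≤ exp (-k) :=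
  calc P.real {ω | 6 * k + 1 ≤ #{i | ω ∈ s i}}
      ≤ exp (-log 3 * ((6 * k + 1 : ℕ) : ℝ)) *
          (1 + (exp (log 3) - 1) * (1 / 4)) ^ (12 * k + 1) :=
        hι ▸ measureReal_le_card_le hs hindep hp (log_nonneg (by norm_num)) _
    _ = (3 : ℝ)⁻¹ ^ (6 * k + 1) * (3 / 2) ^ (12 * k + 1) := by
        rw [← log_inv, mul_comm (log _), exp_nat_mul, exp_log (by norm_num),
          exp_log (by norm_num)]
        norm_num
    _ ≤ exp (-k) := inv_three_pow_mul_three_halves_pow_le k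

end

theorem median_powering_general (μ ε δ : ℝ) (hδ : δ ∈ Set.Ioo (0 : ℝ) 1)
    (N : ℕ) (hN : N = 12 * ⌈Real.log (1 / δ)⌉₊ + 1)
    {Ω : Type*} [MeasurableSpace Ω] (P : Measure Ω) [IsProbabilityMeasure P]
    (Y : Fin N → Ω → ℝ) (hmeas : ∀ i, Measurable (Y i))
    (hindep : iIndepFun Y P)
    (hgood : ∀ i, (3 : ℝ) / 4 ≤ (P {ω | |Y i ω - μ| ≤ ε}).toReal) :
    1 - δ ≤ (P {ω | |med (fun i => Y i ω) - μ| ≤ ε}).toReal := by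
  set k := ⌈Real.log (1 / δ)⌉₊
  set B := Set.Icc (μ - ε) (μ + ε)
  have hB : ∀ y, y ∈ B ↔ |y - μ| ≤ ε := fun y => by
    rw [abs_sub_comm, Set.mem_Icc_iff_abs_le]
  set A := {ω | 6 * k + 1 ≤ #{i | ω ∈ Y i ⁻¹' Bᶜ}}
  have hbad : ∀ i, P.real (Y i ⁻¹' Bᶜ) ≤ 1 / 4 := fun i => by
    rw [Set.preimage_compl, probReal_compl_eq_one_sub (hmeas i measurableSet_Icc)]
    have hgood_i : (3 : ℝ) / 4 ≤ P.real (Y i ⁻¹' B) := by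
      simpa only [Set.preimage, hB, measureReal_def] using hgood i
    linarith
  have hδk : exp (-k) ≤ δ :=
    calc exp (-k) ≤ exp (-log (1 / δ)) := exp_le_exp.2 (neg_le_neg (Nat.le_ceil _))
      _ = δ := by rw [one_div, log_inv, neg_neg, exp_log hδ.1]
  have htail : P.real A ≤ δ :=
    (measureReal_majority_le_exp_neg (by simp [hN]) (fun i => hmeas i measurableSet_Icc.compl)
      (hindep.iIndepSet_preimage hmeas measurableSet_Icc.compl) hbad).trans hδk
  have hmed : Aᶜ ⊆ {ω | |med (fun i => Y i ω) - μ| ≤ ε} := fun ω hω => by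
    have hsplit := card_filter_add_card_filter_not (s := univ) (fun i => Y i ω ∉ B)
    simp only [not_not, card_univ, Fintype.card_fin] at hsplit
    simp only [A, Set.mem_compl_iff, Set.mem_ofPred_eq, Set.mem_preimage, not_le] at hω
    exact (hB _).1 (med_mem_Icc (fun i => Y i ω) (a := μ - ε) (b := μ + ε)
      (by change N / 2 < #{i | Y i ω ∈ B}; omega))
  calc 1 - δ ≤ 1 - P.real A := by linarith
    _ = P.real Aᶜ :=
        (probReal_compl_eq_one_sub (measurableSet_le measurable_const
          (measurable_card_filter_mem fun i => hmeas i measurableSet_Icc.compl))).symm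
    _ ≤ P.real {ω | |med (fun i => Y i ω) - μ| ≤ ε} := measureReal_mono hmed

/-- Powering lemma: if each of `N = 12⌈log δ⁻¹⌉ + 1` i.i.d. random variables is an
`ε`-approximation of `μ` with probability at least `3/4`, then their median is an
`ε`-approximation of `μ` with probability at least `1 − δ`. -/
theorem median_powering (μ ε δ : ℝ) (hε : 0 < ε) (hδ : δ ∈ Set.Ioo (0 : ℝ) 1)
    (N : ℕ) (hN : N = 12 * ⌈Real.log (1 / δ)⌉₊ + 1)
    {Ω : Type*} [MeasurableSpace Ω] (P : Measure Ω) [IsProbabilityMeasure P]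
    (Y : Fin N → Ω → ℝ) (hmeas : ∀ i, Measurable (Y i))
    (hindep : iIndepFun Y P)
    (hident : ∀ i j, IdentDistrib (Y i) (Y j) P P)
    (hgood : ∀ i, (3 : ℝ) / 4 ≤ (P {ω | |Y i ω - μ| ≤ ε}).toReal) :
    1 - δ ≤ (P {ω | |med (fun i => Y i ω) - μ| ≤ ε}).toReal :=
  median_powering_general μ ε δ hδ N hN P Y hmeas hindep hgood
end

section
/- Let N ≥ 1 and M ≥ 1 be integers, let ρ_soft < ρ_hard be real numbers, and set ε := (ρ_hard − ρ_soft)/2 and ρ_mid := (ρ_hard + ρ_soft)/2. Let δ′ ∈ (0, 1/2]. For each pair (m,j) ∈ {0,…,N−1}×{0,…,M−1} let ρ_{m,j} ∈ ℝ, let 𝒴_{m,j} be a finite set of real numbers, and let α_{m,j,y} ∈ ℂ for y ∈ 𝒴_{m,j}, satisfying ∑_{y ∈ 𝒴_{m,j}, |y − ρ_{m,j}| ≤ ε} |α_{m,j,y}|² ≥ 1 − δ′. Define p₁ := (1/(N·M))·∑_{(m,j)} ∑_{y ∈ 𝒴_{m,j}, y ≥ ρ_mid} |α_{m,j,y}|²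 and r̃ := #{(m,j) : ρ_{m,j} ≥ ρ_hard}/(N·M). Then p₁ ≥ r̃/2; in particular, if there exists a pair (m,j) with ρ_{m,j} ≥ ρ_hard, then p₁ ≥ 1/(2·N·M). -/
/-!
Every output within `ε` of a true SNR `ρ ≥ ρ_hard` lies above `ρ_hard - ε = ρ_mid`, so each
such pair contributes at least `1 - δ' ≥ 1/2` to the unnormalised flag probability. Summing
over the `r̃ · N M` such pairs, and dropping the nonnegative contributions of the others,
gives `p₁ ≥ r̃ / 2`; a single such pair makes `r̃ ≥ 1 / (N M)`.
-/

open Finset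

theorem sum_filter_abs_sub_le_le_sum_filter_le (Y : Finset ℝ) {w : ℝ → ℝ} (hw : ∀ y, 0 ≤ w y)
    {r ε t : ℝ} (ht : t ≤ r - ε) :
    ∑ y ∈ Y.filter (fun y => |y - r| ≤ ε), w y ≤ ∑ y ∈ Y.filter (fun y => t ≤ y), w y :=
  sum_le_sum_of_subset_of_nonneg
    (monotone_filter_right _ fun _ _ hy => ht.trans (by linarith [(abs_le.mp hy).1]))
    fun y _ _ => hw y

theorem card_filter_mul_le_sum {ι : Type*} [Fintype ι] {A : ι → ℝ} (hA : ∀ i, 0 ≤ A i)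
    {P : ι → Prop} [DecidablePred P] {c : ℝ} (hc : ∀ i, P i → c ≤ A i) :
    #(univ.filter P) * c ≤ ∑ i, A i :=
  calc #(univ.filter P) * c = #(univ.filter P) • c := (nsmul_eq_mul _ _).symm
    _ ≤ ∑ i ∈ univ.filter P, A i := card_nsmul_le_sum _ _ _ fun i hi => hc i (mem_filter.mp hi).2
    _ ≤ ∑ i, A i := sum_le_sum_of_subset_of_nonneg (subset_univ _) fun i _ _ => hA i

theorem matched_flag_prob_lower_bound_general (N M : ℕ)
    (ρsoft ρhard : ℝ)
    (ε ρmid : ℝ) (hε : ε = (ρhard - ρsoft) / 2) (hmid : ρmid = (ρhard + ρsoft) / 2)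
    (δ' : ℝ) (hδ' : δ' ∈ Set.Ioc (0 : ℝ) (1 / 2))
    (ρ : Fin N → Fin M → ℝ) (Y : Fin N → Fin M → Finset ℝ)
    (α : Fin N → Fin M → ℝ → ℂ)
    (hgood : ∀ m j, 1 - δ' ≤
      ∑ y ∈ (Y m j).filter (fun y => |y - ρ m j| ≤ ε), ‖α m j y‖ ^ 2)
    (p₁ : ℝ) (hp₁ : p₁ = (1 / ((N : ℝ) * M)) *
      ∑ m, ∑ j, ∑ y ∈ (Y m j).filter (fun y => ρmid ≤ y), ‖α m j y‖ ^ 2)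
    (rt : ℝ) (hrt : rt =
      ((Finset.univ.filter (fun p : Fin N × Fin M => ρhard ≤ ρ p.1 p.2)).card : ℝ)
        / ((N : ℝ) * M)) :
    rt / 2 ≤ p₁ ∧ ((∃ m j, ρhard ≤ ρ m j) → 1 / (2 * (N : ℝ) * M) ≤ p₁) := by
  set S := univ.filter (fun p : Fin N × Fin M => ρhard ≤ ρ p.1 p.2)
  set A : Fin N × Fin M → ℝ := fun p =>
    ∑ y ∈ (Y p.1 p.2).filter (fun y => ρmid ≤ y), ‖α p.1 p.2 y‖ ^ 2
  have hmid_eq : ρmid = ρhard - ε := by rw [hmid, hε]; ring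
  have hhalf : ∀ p, ρhard ≤ ρ p.1 p.2 → 1 / 2 ≤ A p := fun p hp =>
    calc (1 : ℝ) / 2 ≤ 1 - δ' := by linarith [hδ'.2]
      _ ≤ _ := hgood p.1 p.2
      _ ≤ A p := sum_filter_abs_sub_le_le_sum_filter_le _ (fun y => sq_nonneg ‖α p.1 p.2 y‖)
        (by linarith)
  have hcount : #S * (1 / 2) ≤ ∑ p, A p :=
    card_filter_mul_le_sum (fun p => sum_nonneg fun y _ => sq_nonneg ‖α p.1 p.2 y‖) hhalf
  have hp₁' : p₁ = (∑ p, A p) / ((N : ℝ) * M) := by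
    rw [hp₁, Fintype.sum_prod_type, one_div_mul_eq_div]
  have hfirst : rt / 2 ≤ p₁ := by
    rw [hp₁', hrt, div_right_comm]
    exact div_le_div_of_nonneg_right (by linarith) (by positivity)
  refine ⟨hfirst, fun ⟨m, j, hmj⟩ => hfirst.trans' ?_⟩
  have hS : (1 : ℝ) ≤ #S := by
    exact_mod_cast card_pos.mpr ⟨(m, j), mem_filter.mpr ⟨mem_univ _, hmj⟩⟩
  rw [hrt, div_div, mul_comm _ (2 : ℝ), ← mul_assoc]
  exact div_le_div_of_nonneg_right hS (by positivity)

/-- Amplitude lower bound for the proposed quantum matched-filtering algorithm: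
if each QMCI output distribution puts weight at least `1 − δ′ ≥ 1/2` on
`ε`-approximations of the true SNR `ρ m j`, then the probability `p₁` of
measuring the 'matched' flag satisfies `p₁ ≥ r̃(ρ_hard)/2`; in particular,
`p₁ ≥ 1/(2NM)` whenever some pair has SNR at least `ρ_hard`. -/
theorem matched_flag_prob_lower_bound (N M : ℕ) (hN : 0 < N) (hM : 0 < M)
    (ρsoft ρhard : ℝ) (hρ : ρsoft < ρhard)
    (ε ρmid : ℝ) (hε : ε = (ρhard - ρsoft) / 2) (hmid : ρmid = (ρhard + ρsoft) / 2)
    (δ' : ℝ) (hδ' : δ' ∈ Set.Ioc (0 : ℝ) (1 / 2))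
    (ρ : Fin N → Fin M → ℝ) (Y : Fin N → Fin M → Finset ℝ)
    (α : Fin N → Fin M → ℝ → ℂ)
    (hgood : ∀ m j, 1 - δ' ≤
      ∑ y ∈ (Y m j).filter (fun y => |y - ρ m j| ≤ ε), ‖α m j y‖ ^ 2)
    (p₁ : ℝ) (hp₁ : p₁ = (1 / ((N : ℝ) * M)) *
      ∑ m, ∑ j, ∑ y ∈ (Y m j).filter (fun y => ρmid ≤ y), ‖α m j y‖ ^ 2)
    (rt : ℝ) (hrt : rt =
      ((Finset.univ.filter (fun p : Fin N × Fin M => ρhard ≤ ρ p.1 p.2)).card : ℝ)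
        / ((N : ℝ) * M)) :
    rt / 2 ≤ p₁ ∧ ((∃ m j, ρhard ≤ ρ m j) → 1 / (2 * (N : ℝ) * M) ≤ p₁) :=
  matched_flag_prob_lower_bound_general N M ρsoft ρhard ε ρmid hε hmid δ' hδ' ρ Y α hgood p₁ hp₁ rt
    hrt
end

section
/- Let N ≥ 1 and M ≥ 1 be integers, let ρ_soft < ρ_hard be real numbers, and set ε := (ρ_hard − ρ_soft)/2 and ρ_mid := (ρ_hard + ρ_soft)/2. Let δ ∈ (0,1) and δ′ := δ/(4·N·M). For each pair (m,j) ∈ {0,…,N−1}×{0,…,M−1} let ρ_{m,j} ∈ ℝ, let 𝒴_{m,j} be a finite set of real numbers, and let α_{m,j,y} ∈ ℂ for y ∈ 𝒴_{m,j}, satisfying ∑_{y ∈ 𝒴_{m,j}} |α_{m,j,y}|² = 1 and ∑_{y ∈ 𝒴_{m,j}, |y − ρ_{m,j}| ≤ ε} |α_{m,j,y}|² ≥ 1 − δ′. Assume there exists a pair (m,j) with ρ_{m,j} ≥ ρ_hard. Then ∑_{(m,j): ρ_{m,j} ≥ ρ_soft} ∑_{y ∈ 𝒴_{m,j}, y ≥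 ρ_mid} |α_{m,j,y}|² ≥ (1 − δ/2) · ∑_{(m,j)} ∑_{y ∈ 𝒴_{m,j}, y ≥ ρ_mid} |α_{m,j,y}|². -/
/-!
Each pair's estimator puts weight at least `1 - δ'` within `ε` of the true SNR. A pair with
`ρ < ρ_soft` therefore contributes at most `δ'` to the flagged weight, since every flagged output
lies more than `ε` from its `ρ`, and all such pairs together at most `N M δ' = δ/4`. A pair with
`ρ ≥ ρ_hard` contributes at least `1 - δ' ≥ 1 - δ/4`, and the bad weight `δ/4` is then at most
a `δ/2` fraction of the total.
-/

open Finset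

theorem sum_filter_le_of_one_sub_le_sum_filter {ι : Type*} {s : Finset ι} {w : ι → ℝ}
    {p q : ι → Prop} [DecidablePred p] [DecidablePred q] {η : ℝ}
    (hw : ∀ i ∈ s, 0 ≤ w i) (hs : ∑ i ∈ s, w i = 1) (hp : 1 - η ≤ ∑ i ∈ s.filter p, w i)
    (hqp : ∀ i ∈ s, q i → ¬ p i) :
    ∑ i ∈ s.filter q, w i ≤ η := by
  have hsub : s.filter q ⊆ s.filter (¬ p ·) := fun i hi => by
    rw [mem_filter] at hi ⊢
    exact ⟨hi.1, hqp i hi.1 hi.2⟩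
  have hsplit := sum_filter_add_sum_filter_not s p w
  have hmono := sum_le_sum_of_subset_of_nonneg hsub fun i hi _ => hw i (mem_filter.mp hi).1
  linarith

section Estimator

variable {Y : Finset ℝ} {α : ℝ → ℂ} {ρ ε δ' t : ℝ}

theorem sum_filter_le_le_of_add_lt (hnorm : ∑ y ∈ Y, ‖α y‖ ^ 2 = 1)
    (hgood : 1 - δ' ≤ ∑ y ∈ Y.filter (fun y => |y - ρ| ≤ ε), ‖α y‖ ^ 2) (ht : ρ + ε < t) :
    ∑ y ∈ Y.filter (fun y => t ≤ y), ‖α y‖ ^ 2 ≤ δ' :=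
  sum_filter_le_of_one_sub_le_sum_filter (fun _ _ => by positivity) hnorm hgood
    fun y _ hty hy => by linarith [(abs_le.mp hy).2]

theorem one_sub_le_sum_filter_le_of_le_sub
    (hgood : 1 - δ' ≤ ∑ y ∈ Y.filter (fun y => |y - ρ| ≤ ε), ‖α y‖ ^ 2) (ht : t ≤ ρ - ε) :
    1 - δ' ≤ ∑ y ∈ Y.filter (fun y => t ≤ y), ‖α y‖ ^ 2 := by
  refine hgood.trans (sum_le_sum_of_subset_of_nonneg (fun y hy => ?_) fun _ _ _ => by positivity)
  rw [mem_filter] at hy ⊢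
  exact ⟨hy.1, by linarith [(abs_le.mp hy.2).1]⟩

end Estimator

theorem one_sub_half_mul_sum_le_sum_filter {ι : Type*} [Fintype ι] {f : ι → ℝ}
    {G : ι → Prop} [DecidablePred G] {η δ : ℝ} (hf : ∀ i, 0 ≤ f i) (hη : 0 ≤ η)
    (hcard : Fintype.card ι * η ≤ δ / 4) (hδ : δ ≤ 2) (hbad : ∀ i, ¬ G i → f i ≤ η)
    {i₀ : ι} (hi₀ : G i₀) (hfi₀ : 1 - η ≤ f i₀) :
    (1 - δ / 2) * ∑ i, f i ≤ ∑ i ∈ univ.filter G, f i := by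
  set S := ∑ i ∈ univ.filter G, f i
  set B := ∑ i ∈ univ.filter (¬ G ·), f i
  have hsplit : ∑ i, f i = S + B := (sum_filter_add_sum_filter_not univ G f).symm
  have hB₀ : 0 ≤ B := sum_nonneg fun i _ => hf i
  have hBle : B ≤ δ / 4 := by
    have hcard' : ((univ.filter (¬ G ·)).card : ℝ) ≤ Fintype.card ι := by
      exact_mod_cast card_filter_le univ _
    calc B ≤ (univ.filter (¬ G ·)).card • η :=
          sum_le_card_nsmul _ _ _ fun i hi => hbad i (mem_filter.mp hi).2
      _ ≤ Fintype.card ι * η := by rw [nsmul_eq_mul]; gcongr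
      _ ≤ δ / 4 := hcard
  have hone : (1 : ℝ) ≤ Fintype.card ι := by exact_mod_cast Fintype.card_pos_iff.mpr ⟨i₀⟩
  have hηδ : η ≤ δ / 4 := by nlinarith
  have hS : 1 - η ≤ S := hfi₀.trans (single_le_sum (fun i _ => hf i) (by simpa using hi₀))
  rw [hsplit]
  nlinarith

theorem flagged_weight_mostly_good_general (N M : ℕ)
    (ρsoft ρhard : ℝ) (hρ : ρsoft < ρhard)
    (ε ρmid : ℝ) (hε : ε = (ρhard - ρsoft) / 2) (hmid : ρmid = (ρhard + ρsoft) / 2)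
    (δ : ℝ) (hδ : δ ∈ Set.Ioo (0 : ℝ) 1)
    (δ' : ℝ) (hδ' : δ' = δ / (4 * (N : ℝ) * M))
    (ρ : Fin N → Fin M → ℝ) (Y : Fin N → Fin M → Finset ℝ)
    (α : Fin N → Fin M → ℝ → ℂ)
    (hnorm : ∀ m j, ∑ y ∈ Y m j, ‖α m j y‖ ^ 2 = 1)
    (hgood : ∀ m j, 1 - δ' ≤
      ∑ y ∈ (Y m j).filter (fun y => |y - ρ m j| ≤ ε), ‖α m j y‖ ^ 2)
    (hex : ∃ m j, ρhard ≤ ρ m j) :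
    (1 - δ / 2) *
        ∑ p : Fin N × Fin M,
          ∑ y ∈ (Y p.1 p.2).filter (fun y => ρmid ≤ y), ‖α p.1 p.2 y‖ ^ 2
      ≤ ∑ p ∈ Finset.univ.filter (fun p : Fin N × Fin M => ρsoft ≤ ρ p.1 p.2),
          ∑ y ∈ (Y p.1 p.2).filter (fun y => ρmid ≤ y),
            ‖α p.1 p.2 y‖ ^ 2 := by
  obtain ⟨hδ₀, hδ₁⟩ := hδ
  obtain ⟨m₀, j₀, hm₀⟩ := hex
  subst hε hmid
  have hδ'₀ : 0 ≤ δ' := by rw [hδ']; positivity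
  have hcard : (Fintype.card (Fin N × Fin M) : ℝ) * δ' ≤ δ / 4 := by
    have hNM : (0 : ℝ) ≤ N * M := by positivity
    rw [hδ', mul_assoc 4, Fintype.card_prod, Fintype.card_fin, Fintype.card_fin, Nat.cast_mul]
    rcases hNM.eq_or_lt with hzero | hpos
    · rw [← hzero, zero_mul]
      positivity
    · rw [← div_div, mul_div_cancel₀ _ hpos.ne']
  refine one_sub_half_mul_sum_le_sum_filter (fun _ => sum_nonneg fun _ _ => by positivity)
    hδ'₀ hcard (by linarith) (fun p hp => sum_filter_le_le_of_add_lt (hnorm _ _) (hgood _ _) ?_)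
    (i₀ := (m₀, j₀)) (by dsimp only; linarith)
    (one_sub_le_sum_filter_le_of_le_sub (hgood m₀ j₀) (by linarith))
  linarith [not_le.mp hp]

/-- Conditioned on measuring the 'matched' flag, the measured pair has true SNR at
least `ρ_soft` with probability at least `1 − δ/2`: the weight of flagged outcomes
coming from pairs with `ρ_{m,j} ≥ ρ_soft` is at least `(1 − δ/2)` times the total
flagged weight. -/
theorem flagged_weight_mostly_good (N M : ℕ) (hN : 0 < N) (hM : 0 < M)
    (ρsoft ρhard : ℝ) (hρ : ρsoft < ρhard)
    (ε ρmid : ℝ) (hε : ε = (ρhard - ρsoft) / 2) (hmid : ρmid = (ρhard + ρsoft) / 2)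
    (δ : ℝ) (hδ : δ ∈ Set.Ioo (0 : ℝ) 1)
    (δ' : ℝ) (hδ' : δ' = δ / (4 * (N : ℝ) * M))
    (ρ : Fin N → Fin M → ℝ) (Y : Fin N → Fin M → Finset ℝ)
    (α : Fin N → Fin M → ℝ → ℂ)
    (hnorm : ∀ m j, ∑ y ∈ Y m j, ‖α m j y‖ ^ 2 = 1)
    (hgood : ∀ m j, 1 - δ' ≤
      ∑ y ∈ (Y m j).filter (fun y => |y - ρ m j| ≤ ε), ‖α m j y‖ ^ 2)
    (hex : ∃ m j, ρhard ≤ ρ m j) :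
    (1 - δ / 2) *
        ∑ p : Fin N × Fin M,
          ∑ y ∈ (Y p.1 p.2).filter (fun y => ρmid ≤ y), ‖α p.1 p.2 y‖ ^ 2
      ≤ ∑ p ∈ Finset.univ.filter (fun p : Fin N × Fin M => ρsoft ≤ ρ p.1 p.2),
          ∑ y ∈ (Y p.1 p.2).filter (fun y => ρmid ≤ y),
            ‖α p.1 p.2 y‖ ^ 2 :=
  flagged_weight_mostly_good_general N M ρsoft ρhard hρ ε ρmid hε hmid δ hδ δ' hδ' ρ Y α hnorm hgood
    hex
end

section
/- Let a ∈ (0, 3/4), let θ := arcsin(√a), and let M ≥ 1 be an integer. Then (1/M)·∑_{j=0}^{M−1} sin²((2j+1)θ) ≥ (1/2)·(1 − 1/(2·M·√a)). -/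
open Real Finset

/-- Telescoping: `2 sin 2θ cos((4j+2)θ) = sin(4(j+1)θ) - sin(4jθ)`. -/
theorem sum_range_cos_odd_mul_two_sin_two_mul (θ : ℝ) (M : ℕ) :
    (∑ j ∈ range M, cos (2 * ((2 * (j : ℝ) + 1) * θ))) * (2 * sin (2 * θ)) =
      sin (4 * M * θ) := by
  induction M with
  | zero => simp
  | succ n ih =>
    have step : sin (4 * ((n : ℝ) + 1) * θ) - sin (4 * n * θ) =
        2 * sin (2 * θ) * cos (2 * ((2 * (n : ℝ) + 1) * θ)) := by
      rw [sin_sub_sin]; ring_nf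
    rw [sum_range_succ, add_mul, ih]
    push_cast
    linarith

theorem sum_range_sin_odd_mul_sq {θ : ℝ} (hθ : sin (2 * θ) ≠ 0) (M : ℕ) :
    ∑ j ∈ range M, sin ((2 * (j : ℝ) + 1) * θ) ^ 2 =
      M / 2 - sin (4 * M * θ) / (4 * sin (2 * θ)) := by
  have hcos : ∑ j ∈ range M, cos (2 * ((2 * (j : ℝ) + 1) * θ)) =
      sin (4 * M * θ) / (2 * sin (2 * θ)) := by
    rw [eq_div_iff (mul_ne_zero two_ne_zero hθ)]
    exact sum_range_cos_odd_mul_two_sin_two_mul θ M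
  simp_rw [sin_sq_eq_half_sub]
  rw [sum_sub_distrib, sum_const, card_range, ← sum_div, hcos]
  field_simp
  ring

theorem half_sub_le_sum_range_sin_odd_mul_sq {θ s : ℝ} (hs : 0 < s) (hsθ : s ≤ sin (2 * θ))
    (M : ℕ) :
    M / 2 - 1 / (4 * s) ≤ ∑ j ∈ range M, sin ((2 * (j : ℝ) + 1) * θ) ^ 2 := by
  have hθ : 0 < sin (2 * θ) := hs.trans_le hsθ
  rw [sum_range_sin_odd_mul_sq hθ.ne']
  have : sin (4 * M * θ) / (4 * sin (2 * θ)) ≤ 1 / (4 * s) := calc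
    sin (4 * M * θ) / (4 * sin (2 * θ)) ≤ 1 / (4 * sin (2 * θ)) := by
      gcongr; exact sin_le_one _
    _ ≤ 1 / (4 * s) := by gcongr
  linarith

theorem sin_two_mul_arcsin {x : ℝ} (hx₁ : -1 ≤ x) (hx₂ : x ≤ 1) :
    sin (2 * arcsin x) = 2 * x * √(1 - x ^ 2) := by
  rw [sin_two_mul, sin_arcsin hx₁ hx₂, cos_arcsin]

theorem le_sin_two_mul_arcsin {x : ℝ} (hx : 0 ≤ x) (hx' : x ^ 2 ≤ 3 / 4) :
    x ≤ sin (2 * arcsin x) := by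
  have hx1 : x ≤ 1 := by nlinarith
  have half_le : 1 / 2 ≤ √(1 - x ^ 2) :=
    le_sqrt_of_sq_le (by linarith)
  rw [sin_two_mul_arcsin (by linarith) hx1]
  nlinarith

/-- Success probability of one round of amplitude amplification with a uniformly
random iteration count: for `a = sin²θ ∈ (0, 3/4)`,
`(1/M)·∑_{j=0}^{M−1} sin²((2j+1)θ) ≥ (1/2)(1 − 1/(2M√a))`. -/
theorem avg_sin_sq_ge (a : ℝ) (ha : a ∈ Set.Ioo (0 : ℝ) (3 / 4))
    (θ : ℝ) (hθ : θ = Real.arcsin (Real.sqrt a))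
    (M : ℕ) (hM : 1 ≤ M) :
    (1 / 2) * (1 - 1 / (2 * (M : ℝ) * Real.sqrt a)) ≤
      (1 / (M : ℝ)) * ∑ j ∈ Finset.range M, Real.sin ((2 * (j : ℝ) + 1) * θ) ^ 2 := by
  obtain ⟨ha₀, ha₁⟩ := ha
  have hs : 0 < √a := sqrt_pos.mpr ha₀
  have hsθ : √a ≤ sin (2 * θ) :=
    hθ ▸ le_sin_two_mul_arcsin hs.le (by rw [sq_sqrt ha₀.le]; linarith)
  have hM' : (0 : ℝ) < M := by exact_mod_cast hM
  have hsum := half_sub_le_sum_range_sin_odd_mul_sq hs hsθ M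
  calc (1 / 2) * (1 - 1 / (2 * (M : ℝ) * √a))
      = (1 / (M : ℝ)) * (M / 2 - 1 / (4 * √a)) := by field_simp; ring
    _ ≤ _ := by gcongr
end
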